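/- (Recursive variance formula) For every baseline function b and every μ ∈ Λ: at t = T−1, Var(G^b(τ^μ_{t:T−1}) | S_t = s) = E_{a∼μ_t(·|s)}[ ρ_t² (q_{π,t}(s,a) − b_t(s,a))² ] − (v_{π,t}(s) − b̄_t(s))²; and for t ∈ {0,…,T−2}, Var(G^b(τ^μ_{t:T−1}) | S_t = s) = E_{a∼μ_t(·|s)}[ ρ_t² ( Σ_{s'} p(s'|s,a)·Var(G^b(τ^μ_{t+1:T−1}) | S_{t+1}=s') + ν_{π,t}(s,a) + (q_{π,t}(s,a) − b_t(s,a))² ) ] − (v_{π,t}(s) − b̄_t(s))², where ρ_t = π_t(a|s)/μ_t(a|s). -/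
import Mathlib


open Finset

namespace DOpt

variable {S A : Type}

/-- A time-indexed policy: for each time step and state, a probability distribution on actions. -/
def IsPolicy [Fintype A] (μ : ℕ → S → A → ℝ) : Prop :=
  ∀ t s, (∀ a, 0 ≤ μ t s a) ∧ ∑ a, μ t s a = 1

/-- A transition probability kernel on the finite state space. -/
def IsKernel [Fintype S] (p : S → A → S → ℝ) : Prop :=
  ∀ s a, (∀ s', 0 ≤ p s a s') ∧ ∑ s', p s a s' = 1

/-- Action value `q_{π,t}(s,a)` computed with `n` remaining transitions after time `t`
(`n = T - 1 - t` in a horizon-`T` MDP). -/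
noncomputable def qval [Fintype S] [Fintype A] (p : S → A → S → ℝ) (π : ℕ → S → A → ℝ)
    (r : S → A → ℝ) : ℕ → ℕ → S → A → ℝ
  | 0, _, s, a => r s a
  | n + 1, t, s, a =>
      r s a + ∑ s', p s a s' * ∑ a', π (t + 1) s' a' * qval p π r n (t + 1) s' a'

/-- `q_{π,t}(s,a)` in the horizon-`T` MDP. -/
noncomputable def qf [Fintype S] [Fintype A] (T : ℕ) (p : S → A → S → ℝ)
    (π : ℕ → S → A → ℝ) (r : S → A → ℝ) (t : ℕ) (s : S) (a : A) : ℝ :=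
  qval p π r (T - 1 - t) t s a

/-- `v_{π,t}(s) = Σ_a π_t(a|s) q_{π,t}(s,a)`. -/
noncomputable def vf [Fintype S] [Fintype A] (T : ℕ) (p : S → A → S → ℝ)
    (π : ℕ → S → A → ℝ) (r : S → A → ℝ) (t : ℕ) (s : S) : ℝ :=
  ∑ a, π t s a * qf T p π r t s a

/-- `ν_{π,t}(s,a) = Var_{s' ∼ p(·|s,a)}(v_{π,t+1}(s'))` for `t ≤ T-2`, and `0` at `t = T-1`. -/
noncomputable def nuf [Fintype S] [Fintype A] (T : ℕ) (p : S → A → S → ℝ)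
    (π : ℕ → S → A → ℝ) (r : S → A → ℝ) (t : ℕ) (s : S) (a : A) : ℝ :=
  if t + 2 ≤ T then
    (∑ s', p s a s' * (vf T p π r (t + 1) s') ^ 2) -
      (∑ s', p s a s' * vf T p π r (t + 1) s') ^ 2
  else 0

/-- Trajectories with `n` further transitions after the first action:
`(a_t, s_{t+1}, a_{t+1}, …, s_{t+n}, a_{t+n})`. -/
def Traj (S A : Type) : ℕ → Type
  | 0 => A
  | n + 1 => A × S × Traj S A n

/-- Expectation, over trajectories generated by the behavior policy `μ` starting at time `t`
in state `s` with `n` further transitions, of a function `f` of the trajectory. -/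
noncomputable def Exp [Fintype S] [Fintype A] (p : S → A → S → ℝ) (μ : ℕ → S → A → ℝ) :
    (n : ℕ) → ℕ → S → (Traj S A n → ℝ) → ℝ
  | 0, t, s, f => ∑ a, μ t s a * f a
  | n + 1, t, s, f =>
      ∑ a, μ t s a * ∑ s', p s a s' * Exp p μ n (t + 1) s' (fun τ => f (a, s', τ))

/-- Conditional variance of a function of the trajectory, given `S_t = s`. -/
noncomputable def Var [Fintype S] [Fintype A] (p : S → A → S → ℝ) (μ : ℕ → S → A → ℝ)
    (n : ℕ) (t : ℕ) (s : S) (f : Traj S A n → ℝ) : ℝ :=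
  Exp p μ n t s (fun τ => (f τ) ^ 2) - (Exp p μ n t s f) ^ 2

/-- `b̄_t(s) = Σ_a π_t(a|s) b_t(s,a)`. -/
noncomputable def bbar [Fintype A] (π : ℕ → S → A → ℝ) (b : ℕ → S → A → ℝ)
    (t : ℕ) (s : S) : ℝ :=
  ∑ a, π t s a * b t s a

/-- The per-decision importance-sampling estimator `G^b` with baseline `b`, target policy `π`
and behavior policy `μ`, as a function of the trajectory from time `t` (with `n` further
transitions, `n = T - 1 - t`). -/
noncomputable def Gest [Fintype S] [Fintype A] (π μ : ℕ → S → A → ℝ) (r : S → A → ℝ)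
    (b : ℕ → S → A → ℝ) : (n : ℕ) → ℕ → S → Traj S A n → ℝ
  | 0, t, s, a => (π t s a / μ t s a) * (r s a - b t s a) + bbar π b t s
  | n + 1, t, s, (a, s', τ) =>
      (π t s a / μ t s a) * (r s a + Gest π μ r b n (t + 1) s' τ - b t s a) + bbar π b t s

/-- Normalization of a weight vector into a probability distribution; the uniform distribution
when the total weight vanishes. -/
noncomputable def normPol [Fintype A] (w : A → ℝ) (a : A) : ℝ :=
  if (∑ a', w a') = 0 then ((Fintype.card A : ℝ))⁻¹ else w a / ∑ a', w a'

/-- `u_{π,t}(s,a)` (with baseline `b`), defined backwards in time together with the optimal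
behavior policy `μ*`; the first argument is the number `n = T - 1 - t` of remaining
transitions after time `t`. -/
noncomputable def uAux [Fintype S] [Fintype A] (T : ℕ) (p : S → A → S → ℝ)
    (π : ℕ → S → A → ℝ) (r : S → A → ℝ) (b : ℕ → S → A → ℝ) :
    ℕ → ℕ → S → A → ℝ
  | 0, t, s, a => (qf T p π r t s a - b t s a) ^ 2
  | n + 1, t, s, a =>
      (qf T p π r t s a - b t s a) ^ 2 + nuf T p π r t s a +
        ∑ s', p s a s' *
          Var p
            (fun t' s₁ a₁ => normPol (fun a₂ =>
              π t' s₁ a₂ * Real.sqrt (uAux T p π r b (n - (t' - (t + 1))) t' s₁ a₂)) a₁)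
            n (t + 1) s'
            (Gest π
              (fun t' s₁ a₁ => normPol (fun a₂ =>
                π t' s₁ a₂ * Real.sqrt (uAux T p π r b (n - (t' - (t + 1))) t' s₁ a₂)) a₁)
              r b n (t + 1) s')
  termination_by n => n
  decreasing_by all_goals omega

/-- `u_{π,t}(s,a)` in the horizon-`T` MDP, with baseline `b`. -/
noncomputable def uf [Fintype S] [Fintype A] (T : ℕ) (p : S → A → S → ℝ)
    (π : ℕ → S → A → ℝ) (r : S → A → ℝ) (b : ℕ → S → A → ℝ) (t : ℕ) (s : S) (a : A) : ℝ :=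
  uAux T p π r b (T - 1 - t) t s a

/-- The optimal behavior policy `μ*_t(a|s) ∝ π_t(a|s) √(u_{π,t}(s,a))` tailored to the
baseline `b` (uniform when all the weights vanish). -/
noncomputable def mustar [Fintype S] [Fintype A] (T : ℕ) (p : S → A → S → ℝ)
    (π : ℕ → S → A → ℝ) (r : S → A → ℝ) (b : ℕ → S → A → ℝ) (t : ℕ) (s : S) (a : A) : ℝ :=
  normPol (fun a' => π t s a' * Real.sqrt (uf T p π r b t s a')) a

/-- Conditional expectation `E[G^b(τ^μ_{t:T-1}) | S_t = s]`. -/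
noncomputable def ExpG [Fintype S] [Fintype A] (T : ℕ) (p : S → A → S → ℝ)
    (π μ : ℕ → S → A → ℝ) (r : S → A → ℝ) (b : ℕ → S → A → ℝ) (t : ℕ) (s : S) : ℝ :=
  Exp p μ (T - 1 - t) t s (Gest π μ r b (T - 1 - t) t s)

/-- Conditional variance `Var(G^b(τ^μ_{t:T-1}) | S_t = s)`. -/
noncomputable def VarG [Fintype S] [Fintype A] (T : ℕ) (p : S → A → S → ℝ)
    (π μ : ℕ → S → A → ℝ) (r : S → A → ℝ) (b : ℕ → S → A → ℝ) (t : ℕ) (s : S) : ℝ :=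
  Var p μ (T - 1 - t) t s (Gest π μ r b (T - 1 - t) t s)

/-- Membership in the enlarged policy-search space
`Λ = {μ : ∀ t,s,a, μ_t(a|s) = 0 → π_t(a|s)·u_{π,t}(s,a) = 0}`. -/
def inLambda [Fintype S] [Fintype A] (T : ℕ) (p : S → A → S → ℝ)
    (π : ℕ → S → A → ℝ) (r : S → A → ℝ) (b : ℕ → S → A → ℝ) (μ : ℕ → S → A → ℝ) : Prop :=
  ∀ t s a, t < T → μ t s a = 0 → π t s a * uf T p π r b t s a = 0


/-- The optimal baseline `b*_t(s,a) = q_{π,t}(s,a)`. -/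
noncomputable def bstar [Fintype S] [Fintype A] (T : ℕ) (p : S → A → S → ℝ)
    (π : ℕ → S → A → ℝ) (r : S → A → ℝ) : ℕ → S → A → ℝ :=
  fun t s a => qf T p π r t s a

/-- The zero baseline: with it, `Gest` is the plain PDIS estimator `G^{PDIS}`. -/
def zerob : ℕ → S → A → ℝ := fun _ _ _ => 0

section Helpers

variable {S A : Type} [Fintype S] [Fintype A]

lemma sum_lin2 {ι : Type} [Fintype ι] (w x : ι → ℝ) (hw : ∑ i, w i = 1) (α γ : ℝ) :
    ∑ i, w i * (α * x i + γ) = α * (∑ i, w i * x i) + γ := by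
  have h : ∀ i ∈ Finset.univ, w i * (α * x i + γ) = α * (w i * x i) + γ * w i :=
    fun i _ => by ring
  rw [Finset.sum_congr rfl h, Finset.sum_add_distrib, ← Finset.mul_sum, ← Finset.mul_sum, hw,
    mul_one]

lemma sum_lin3 {ι : Type} [Fintype ι] (w x y : ι → ℝ) (hw : ∑ i, w i = 1) (α β γ : ℝ) :
    ∑ i, w i * (α * x i + β * y i + γ) =
      α * (∑ i, w i * x i) + β * (∑ i, w i * y i) + γ := by
  have h : ∀ i ∈ Finset.univ, w i * (α * x i + β * y i + γ) =
      α * (w i * x i) + β * (w i * y i) + γ * w i := fun i _ => by ring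
  rw [Finset.sum_congr rfl h, Finset.sum_add_distrib, Finset.sum_add_distrib,
    ← Finset.mul_sum, ← Finset.mul_sum, ← Finset.mul_sum, hw, mul_one]

lemma jensen_sq {ι : Type} [Fintype ι] (w x : ι → ℝ) (hw : ∀ i, 0 ≤ w i)
    (h1 : ∑ i, w i = 1) : (∑ i, w i * x i) ^ 2 ≤ ∑ i, w i * x i ^ 2 := by
  have h := Finset.sum_mul_sq_le_sq_mul_sq Finset.univ
    (fun i => Real.sqrt (w i)) (fun i => Real.sqrt (w i) * x i)
  have e1 : ∀ i ∈ Finset.univ, Real.sqrt (w i) * (Real.sqrt (w i) * x i) = w i * x i :=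
    fun i _ => by rw [← mul_assoc, Real.mul_self_sqrt (hw i)]
  have e2 : ∀ i ∈ Finset.univ, Real.sqrt (w i) ^ 2 = w i :=
    fun i _ => Real.sq_sqrt (hw i)
  have e3 : ∀ i ∈ Finset.univ, (Real.sqrt (w i) * x i) ^ 2 = w i * x i ^ 2 :=
    fun i _ => by rw [mul_pow, Real.sq_sqrt (hw i)]
  rw [Finset.sum_congr rfl e1, Finset.sum_congr rfl e2, Finset.sum_congr rfl e3, h1,
    one_mul] at h
  exact h

lemma Exp_affine (p : S → A → S → ℝ) (hp : IsKernel p) (μ : ℕ → S → A → ℝ)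
    (hμ : IsPolicy μ) : ∀ (n t : ℕ) (s : S) (f : Traj S A n → ℝ) (c d : ℝ),
    Exp p μ n t s (fun τ => c * f τ + d) = c * Exp p μ n t s f + d := by
  intro n
  induction n with
  | zero => intro t s f c d; exact sum_lin2 (μ t s) f (hμ t s).2 c d
  | succ n ih =>
    intro t s f c d
    show ∑ a, μ t s a * ∑ s', p s a s' *
        Exp p μ n (t + 1) s' (fun τ => c * f (a, s', τ) + d) = _
    have h : ∀ a ∈ Finset.univ, μ t s a * ∑ s', p s a s' *
        Exp p μ n (t + 1) s' (fun τ => c * f (a, s', τ) + d) =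
        μ t s a * (c * (∑ s', p s a s' * Exp p μ n (t + 1) s' (fun τ => f (a, s', τ))) + d) := by
      intro a _
      congr 1
      have h2 : ∀ s' ∈ Finset.univ, p s a s' *
          Exp p μ n (t + 1) s' (fun τ => c * f (a, s', τ) + d) =
          p s a s' * (c * Exp p μ n (t + 1) s' (fun τ => f (a, s', τ)) + d) := by
        intro s' _; rw [ih]
      rw [Finset.sum_congr rfl h2,
        sum_lin2 (p s a) (fun s' => Exp p μ n (t + 1) s' (fun τ => f (a, s', τ))) (hp s a).2 c d]
    rw [Finset.sum_congr rfl h,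
      sum_lin2 (μ t s) _ (hμ t s).2 c d]
    rfl

lemma Exp_quad (p : S → A → S → ℝ) (hp : IsKernel p) (μ : ℕ → S → A → ℝ)
    (hμ : IsPolicy μ) : ∀ (n t : ℕ) (s : S) (f : Traj S A n → ℝ) (c d e : ℝ),
    Exp p μ n t s (fun τ => c * f τ ^ 2 + d * f τ + e) =
      c * Exp p μ n t s (fun τ => f τ ^ 2) + d * Exp p μ n t s f + e := by
  intro n
  induction n with
  | zero => intro t s f c d e; exact sum_lin3 (μ t s) (fun a => f a ^ 2) f (hμ t s).2 c d e
  | succ n ih =>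
    intro t s f c d e
    show ∑ a, μ t s a * ∑ s', p s a s' *
        Exp p μ n (t + 1) s' (fun τ => c * f (a, s', τ) ^ 2 + d * f (a, s', τ) + e) = _
    have h : ∀ a ∈ Finset.univ, μ t s a * ∑ s', p s a s' *
        Exp p μ n (t + 1) s' (fun τ => c * f (a, s', τ) ^ 2 + d * f (a, s', τ) + e) =
        μ t s a * (c * (∑ s', p s a s' * Exp p μ n (t + 1) s' (fun τ => f (a, s', τ) ^ 2)) +
          d * (∑ s', p s a s' * Exp p μ n (t + 1) s' (fun τ => f (a, s', τ))) + e) := by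
      intro a _
      congr 1
      have h2 : ∀ s' ∈ Finset.univ, p s a s' *
          Exp p μ n (t + 1) s' (fun τ => c * f (a, s', τ) ^ 2 + d * f (a, s', τ) + e) =
          p s a s' * (c * Exp p μ n (t + 1) s' (fun τ => f (a, s', τ) ^ 2) +
            d * Exp p μ n (t + 1) s' (fun τ => f (a, s', τ)) + e) := by
        intro s' _; rw [ih]
      rw [Finset.sum_congr rfl h2,
        sum_lin3 (p s a) _ _ (hp s a).2 c d e]
    rw [Finset.sum_congr rfl h, sum_lin3 (μ t s) _ _ (hμ t s).2 c d e]
    rfl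

lemma Exp_sq_le (p : S → A → S → ℝ) (hp : IsKernel p) (μ : ℕ → S → A → ℝ)
    (hμ : IsPolicy μ) : ∀ (n t : ℕ) (s : S) (f : Traj S A n → ℝ),
    (Exp p μ n t s f) ^ 2 ≤ Exp p μ n t s (fun τ => f τ ^ 2) := by
  intro n
  induction n with
  | zero => intro t s f; exact jensen_sq (μ t s) f (hμ t s).1 (hμ t s).2
  | succ n ih =>
    intro t s f
    show (∑ a, μ t s a * ∑ s', p s a s' * Exp p μ n (t + 1) s' (fun τ => f (a, s', τ))) ^ 2 ≤
      ∑ a, μ t s a * ∑ s', p s a s' * Exp p μ n (t + 1) s' (fun τ => f (a, s', τ) ^ 2)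
    calc (∑ a, μ t s a * ∑ s', p s a s' * Exp p μ n (t + 1) s' (fun τ => f (a, s', τ))) ^ 2
        ≤ ∑ a, μ t s a * (∑ s', p s a s' * Exp p μ n (t + 1) s' (fun τ => f (a, s', τ))) ^ 2 :=
          jensen_sq (μ t s) _ (hμ t s).1 (hμ t s).2
      _ ≤ ∑ a, μ t s a * ∑ s', p s a s' * Exp p μ n (t + 1) s' (fun τ => f (a, s', τ) ^ 2) := by
          apply Finset.sum_le_sum
          intro a _
          apply mul_le_mul_of_nonneg_left _ ((hμ t s).1 a)
          calc (∑ s', p s a s' * Exp p μ n (t + 1) s' (fun τ => f (a, s', τ))) ^ 2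
              ≤ ∑ s', p s a s' * (Exp p μ n (t + 1) s' (fun τ => f (a, s', τ))) ^ 2 :=
                jensen_sq (p s a) _ (hp s a).1 (hp s a).2
            _ ≤ ∑ s', p s a s' * Exp p μ n (t + 1) s' (fun τ => f (a, s', τ) ^ 2) := by
                apply Finset.sum_le_sum
                intro s' _
                exact mul_le_mul_of_nonneg_left (ih (t + 1) s' _) ((hp s a).1 s')

lemma Var_nonneg' (p : S → A → S → ℝ) (hp : IsKernel p) (μ : ℕ → S → A → ℝ)
    (hμ : IsPolicy μ) (n t : ℕ) (s : S) (f : Traj S A n → ℝ) :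
    0 ≤ Var p μ n t s f :=
  sub_nonneg.mpr (Exp_sq_le p hp μ hμ n t s f)

lemma isPolicy_normPol [Nonempty A] (w : ℕ → S → A → ℝ) (hw : ∀ t s a, 0 ≤ w t s a) :
    IsPolicy (fun t s a => normPol (w t s) a) := by
  intro t s
  by_cases h : ∑ a, w t s a = 0
  · constructor
    · intro a; simp only [normPol, h, if_pos]
      positivity
    · simp only [normPol, h, if_pos, Finset.sum_const, Finset.card_univ, nsmul_eq_mul]
      rw [mul_inv_cancel₀]
      exact_mod_cast Fintype.card_ne_zero
  · have hpos : 0 < ∑ a, w t s a :=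
      lt_of_le_of_ne (Finset.sum_nonneg fun a _ => hw t s a) (Ne.symm h)
    constructor
    · intro a; simp only [normPol, h, if_neg, if_false]
      exact div_nonneg (hw t s a) hpos.le
    · simp only [normPol, h, if_false]
      rw [← Finset.sum_div, div_self h]

lemma nuf_nonneg (T : ℕ) (p : S → A → S → ℝ) (hp : IsKernel p) (π : ℕ → S → A → ℝ)
    (r : S → A → ℝ) (t : ℕ) (s : S) (a : A) : 0 ≤ nuf T p π r t s a := by
  unfold nuf
  split
  · have := jensen_sq (p s a) (fun s' => vf T p π r (t + 1) s') (hp s a).1 (hp s a).2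
    linarith
  · exact le_refl 0

lemma pi_q_sub_b [Nonempty A] (T : ℕ) (p : S → A → S → ℝ) (hp : IsKernel p)
    (π : ℕ → S → A → ℝ) (hπ : IsPolicy π) (r : S → A → ℝ) (b : ℕ → S → A → ℝ)
    (μ : ℕ → S → A → ℝ) (hΛ : inLambda T p π r b μ) (t : ℕ) (s : S) (a : A)
    (ht : t < T) (hμ0 : μ t s a = 0) :
    π t s a * (qf T p π r t s a - b t s a) = 0 := by
  have hu := hΛ t s a ht hμ0
  have hsq : (qf T p π r t s a - b t s a) ^ 2 ≤ uf T p π r b t s a := by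
    unfold uf
    cases h : T - 1 - t with
    | zero => simp [uAux]
    | succ n =>
      rw [uAux]
      have h1 := nuf_nonneg T p hp π r t s a
      have h2 : 0 ≤ ∑ s', p s a s' *
          Var p (fun t' s₁ a₁ => normPol (fun a₂ =>
            π t' s₁ a₂ * Real.sqrt (uAux T p π r b (n - (t' - (t + 1))) t' s₁ a₂)) a₁)
            n (t + 1) s'
            (Gest π (fun t' s₁ a₁ => normPol (fun a₂ =>
              π t' s₁ a₂ * Real.sqrt (uAux T p π r b (n - (t' - (t + 1))) t' s₁ a₂)) a₁)
              r b n (t + 1) s') := by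
        apply Finset.sum_nonneg
        intro s' _
        apply mul_nonneg ((hp s a).1 s')
        exact Var_nonneg' p hp _
          (isPolicy_normPol _ (fun t' s₁ a₂ =>
            mul_nonneg ((hπ t' s₁).1 a₂) (Real.sqrt_nonneg _))) n (t + 1) s' _
      linarith
  rcases mul_eq_zero.mp hu with h | h
  · rw [h, zero_mul]
  · have : (qf T p π r t s a - b t s a) ^ 2 = 0 :=
      le_antisymm (h ▸ hsq) (sq_nonneg _)
    rw [pow_eq_zero_iff (by norm_num : 2 ≠ 0)] at this
    rw [this, mul_zero]

lemma sum_mu_rho [Nonempty A] (T : ℕ) (p : S → A → S → ℝ) (hp : IsKernel p)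
    (π : ℕ → S → A → ℝ) (hπ : IsPolicy π) (r : S → A → ℝ) (b : ℕ → S → A → ℝ)
    (μ : ℕ → S → A → ℝ) (hΛ : inLambda T p π r b μ) (t : ℕ) (s : S) (ht : t < T) :
    ∑ a, μ t s a * (π t s a / μ t s a * (qf T p π r t s a - b t s a)) =
      vf T p π r t s - bbar π b t s := by
  have key : ∀ a ∈ Finset.univ, μ t s a * (π t s a / μ t s a * (qf T p π r t s a - b t s a)) =
      π t s a * (qf T p π r t s a - b t s a) := by
    intro a _
    by_cases hm : μ t s a = 0
    · rw [hm, zero_mul, pi_q_sub_b T p hp π hπ r b μ hΛ t s a ht hm]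
    · rw [← mul_assoc, mul_div_cancel₀ _ hm]
  rw [Finset.sum_congr rfl key]
  unfold vf bbar
  rw [← Finset.sum_sub_distrib]
  apply Finset.sum_congr rfl
  intro a _
  ring

lemma qf_succ (T : ℕ) (p : S → A → S → ℝ) (π : ℕ → S → A → ℝ) (r : S → A → ℝ)
    (n t : ℕ) (hn : T - 1 - t = n + 1) (s : S) (a : A) :
    qf T p π r t s a = r s a + ∑ s', p s a s' * vf T p π r (t + 1) s' := by
  unfold qf vf qf
  rw [hn, qval]
  have hn' : T - 1 - (t + 1) = n := by omega
  rw [hn']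

lemma unbiased [Nonempty A] (T : ℕ) (p : S → A → S → ℝ) (hp : IsKernel p)
    (π : ℕ → S → A → ℝ) (hπ : IsPolicy π) (r : S → A → ℝ) (b : ℕ → S → A → ℝ)
    (μ : ℕ → S → A → ℝ) (hμ : IsPolicy μ) (hΛ : inLambda T p π r b μ) :
    ∀ (n t : ℕ), t < T → n = T - 1 - t → ∀ s : S,
    Exp p μ n t s (Gest π μ r b n t s) = vf T p π r t s := by
  intro n
  induction n with
  | zero =>
    intro t ht hn s
    have hq : ∀ a, qf T p π r t s a = r s a := by
      intro a; unfold qf; rw [← hn]; rfl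
    show ∑ a, μ t s a * (π t s a / μ t s a * (r s a - b t s a) + bbar π b t s) =
      vf T p π r t s
    have key : ∀ a ∈ Finset.univ, μ t s a * (π t s a / μ t s a * (r s a - b t s a) + bbar π b t s)
        = μ t s a * (π t s a / μ t s a * (qf T p π r t s a - b t s a)) +
          bbar π b t s * μ t s a := by
      intro a _; rw [hq a]; ring
    rw [Finset.sum_congr rfl key, Finset.sum_add_distrib, ← Finset.mul_sum, (hμ t s).2,
      mul_one, sum_mu_rho T p hp π hπ r b μ hΛ t s ht]
    ring
  | succ n ih =>
    intro t ht hn s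
    have ht1 : t + 1 < T := by omega
    have hn1 : n = T - 1 - (t + 1) := by omega
    show ∑ a, μ t s a * ∑ s', p s a s' *
        Exp p μ n (t + 1) s' (fun τ =>
          π t s a / μ t s a * (r s a + Gest π μ r b n (t + 1) s' τ - b t s a) + bbar π b t s) =
      vf T p π r t s
    have key : ∀ a ∈ Finset.univ, μ t s a * ∑ s', p s a s' *
        Exp p μ n (t + 1) s' (fun τ =>
          π t s a / μ t s a * (r s a + Gest π μ r b n (t + 1) s' τ - b t s a) + bbar π b t s) =
        μ t s a * (π t s a / μ t s a * (qf T p π r t s a - b t s a)) +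
          bbar π b t s * μ t s a := by
      intro a _
      have hinner : ∀ s' ∈ (Finset.univ : Finset S), p s a s' *
          Exp p μ n (t + 1) s' (fun τ =>
            π t s a / μ t s a * (r s a + Gest π μ r b n (t + 1) s' τ - b t s a) + bbar π b t s) =
          p s a s' * (π t s a / μ t s a * vf T p π r (t + 1) s' +
            (π t s a / μ t s a * (r s a - b t s a) + bbar π b t s)) := by
        intro s' _
        congr 1
        have heq : (fun τ => π t s a / μ t s a *
            (r s a + Gest π μ r b n (t + 1) s' τ - b t s a) + bbar π b t s) =
            (fun τ => π t s a / μ t s a * Gest π μ r b n (t + 1) s' τ +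
              (π t s a / μ t s a * (r s a - b t s a) + bbar π b t s)) := by
          funext τ; ring
        rw [heq, Exp_affine p hp μ hμ, ih (t + 1) ht1 hn1 s']
      rw [Finset.sum_congr rfl hinner,
        sum_lin2 (p s a) (fun s' => vf T p π r (t + 1) s') (hp s a).2,
        qf_succ T p π r n t hn.symm s a]
      ring
    rw [Finset.sum_congr rfl key, Finset.sum_add_distrib, ← Finset.mul_sum, (hμ t s).2,
      mul_one, sum_mu_rho T p hp π hπ r b μ hΛ t s ht]
    ring

end Helpers

/-- Recursive variance formula: for every baseline `b` and every `μ ∈ Λ`,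
at `t = T−1`,
`Var(G^b(τ^μ_{t:T−1})|S_t=s) = E_{a∼μ_t(·|s)}[ρ_t²(q_{π,t}(s,a)−b_t(s,a))²] − (v_{π,t}(s)−b̄_t(s))²`,
and for `t ∈ {0,…,T−2}`,
`Var(G^b(τ^μ_{t:T−1})|S_t=s) = E_{a∼μ_t(·|s)}[ρ_t²(Σ_{s'} p(s'|s,a)·Var(G^b(τ^μ_{t+1:T−1})|S_{t+1}=s')
 + ν_{π,t}(s,a) + (q_{π,t}(s,a)−b_t(s,a))²)] − (v_{π,t}(s)−b̄_t(s))²`,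
where `ρ_t = π_t(a|s)/μ_t(a|s)`. -/
theorem recursive_variance {S A : Type} [Fintype S] [Fintype A] [Nonempty A]
    (T : ℕ) (hT : 1 ≤ T)
    (p : S → A → S → ℝ) (hp : IsKernel p)
    (r : S → A → ℝ)
    (π : ℕ → S → A → ℝ) (hπ : IsPolicy π)
    (b : ℕ → S → A → ℝ)
    (μ : ℕ → S → A → ℝ) (hμ : IsPolicy μ) (hΛ : inLambda T p π r b μ) :
    (∀ s : S,
      VarG T p π μ r b (T - 1) s =
        (∑ a, μ (T - 1) s a *
          ((π (T - 1) s a / μ (T - 1) s a) ^ 2 *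
            (qf T p π r (T - 1) s a - b (T - 1) s a) ^ 2)) -
        (vf T p π r (T - 1) s - bbar π b (T - 1) s) ^ 2) ∧
    (∀ (t : ℕ) (s : S), t + 2 ≤ T →
      VarG T p π μ r b t s =
        (∑ a, μ t s a *
          ((π t s a / μ t s a) ^ 2 *
            ((∑ s', p s a s' * VarG T p π μ r b (t + 1) s') +
              nuf T p π r t s a + (qf T p π r t s a - b t s a) ^ 2))) -
        (vf T p π r t s - bbar π b t s) ^ 2) := by
  constructor
  · -- Part 1 : t = T - 1
    intro s
    have ht : T - 1 < T := by omega
    have hn : T - 1 - (T - 1) = 0 := by omega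
    have hE : Exp p μ 0 (T - 1) s (Gest π μ r b 0 (T - 1) s) = vf T p π r (T - 1) s :=
      unbiased T p hp π hπ r b μ hμ hΛ 0 (T - 1) ht hn.symm s
    have hq : ∀ a, qf T p π r (T - 1) s a = r s a := by
      intro a; unfold qf; rw [hn]; rfl
    unfold VarG Var
    rw [hn, hE]
    show (∑ a, μ (T - 1) s a *
        (π (T - 1) s a / μ (T - 1) s a * (r s a - b (T - 1) s a) + bbar π b (T - 1) s) ^ 2)
        - vf T p π r (T - 1) s ^ 2 = _
    have key : ∀ a ∈ Finset.univ, μ (T - 1) s a *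
        (π (T - 1) s a / μ (T - 1) s a * (r s a - b (T - 1) s a) + bbar π b (T - 1) s) ^ 2 =
        μ (T - 1) s a * ((π (T - 1) s a / μ (T - 1) s a) ^ 2 *
          (qf T p π r (T - 1) s a - b (T - 1) s a) ^ 2) +
        (2 * bbar π b (T - 1) s) *
          (μ (T - 1) s a * (π (T - 1) s a / μ (T - 1) s a *
            (qf T p π r (T - 1) s a - b (T - 1) s a))) +
        bbar π b (T - 1) s ^ 2 * μ (T - 1) s a := by
      intro a _; rw [hq a]; ring
    rw [Finset.sum_congr rfl key, Finset.sum_add_distrib, Finset.sum_add_distrib,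
      ← Finset.mul_sum, ← Finset.mul_sum, (hμ (T - 1) s).2,
      sum_mu_rho T p hp π hπ r b μ hΛ (T - 1) s ht]
    ring
  · -- Part 2 : t ≤ T - 2
    intro t s ht2
    have ht : t < T := by omega
    have ht1 : t + 1 < T := by omega
    have h1 : T - 1 - t = (T - 2 - t) + 1 := by omega
    set n := T - 2 - t with hndef
    have h2 : T - 1 - (t + 1) = n := by omega
    have hE : Exp p μ (n + 1) t s (Gest π μ r b (n + 1) t s) = vf T p π r t s :=
      unbiased T p hp π hπ r b μ hμ hΛ (n + 1) t ht h1.symm s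
    have hEin : ∀ s' : S, Exp p μ n (t + 1) s' (Gest π μ r b n (t + 1) s') =
        vf T p π r (t + 1) s' :=
      fun s' => unbiased T p hp π hπ r b μ hμ hΛ n (t + 1) ht1 h2.symm s'
    have hVin : ∀ s' : S, Exp p μ n (t + 1) s'
        (fun τ => Gest π μ r b n (t + 1) s' τ ^ 2) =
        VarG T p π μ r b (t + 1) s' + vf T p π r (t + 1) s' ^ 2 := by
      intro s'
      unfold VarG Var
      rw [h2, hEin s']
      ring
    have hq : ∀ a, qf T p π r t s a =
        r s a + ∑ s', p s a s' * vf T p π r (t + 1) s' :=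
      qf_succ T p π r n t h1 s
    have hnuf : ∀ a, nuf T p π r t s a =
        (∑ s', p s a s' * vf T p π r (t + 1) s' ^ 2) -
          (∑ s', p s a s' * vf T p π r (t + 1) s') ^ 2 := by
      intro a; unfold nuf; rw [if_pos ht2]
    have hVG : VarG T p π μ r b t s =
        Exp p μ (n + 1) t s (fun τ => Gest π μ r b (n + 1) t s τ ^ 2) -
          (Exp p μ (n + 1) t s (Gest π μ r b (n + 1) t s)) ^ 2 := by
      unfold VarG Var; rw [h1]
    rw [hVG, hE]
    show (∑ a, μ t s a * ∑ s', p s a s' * Exp p μ n (t + 1) s'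
        (fun τ => (π t s a / μ t s a *
          (r s a + Gest π μ r b n (t + 1) s' τ - b t s a) + bbar π b t s) ^ 2))
        - vf T p π r t s ^ 2 = _
    have key : ∀ a ∈ Finset.univ, μ t s a * ∑ s', p s a s' * Exp p μ n (t + 1) s'
        (fun τ => (π t s a / μ t s a *
          (r s a + Gest π μ r b n (t + 1) s' τ - b t s a) + bbar π b t s) ^ 2) =
        μ t s a * ((π t s a / μ t s a) ^ 2 *
          ((∑ s', p s a s' * VarG T p π μ r b (t + 1) s') +
            nuf T p π r t s a + (qf T p π r t s a - b t s a) ^ 2)) +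
        (2 * bbar π b t s) *
          (μ t s a * (π t s a / μ t s a * (qf T p π r t s a - b t s a))) +
        bbar π b t s ^ 2 * μ t s a := by
      intro a _
      have hinner : ∀ s' ∈ (Finset.univ : Finset S), p s a s' * Exp p μ n (t + 1) s'
          (fun τ => (π t s a / μ t s a *
            (r s a + Gest π μ r b n (t + 1) s' τ - b t s a) + bbar π b t s) ^ 2) =
          p s a s' * ((π t s a / μ t s a) ^ 2 *
              (VarG T p π μ r b (t + 1) s' + vf T p π r (t + 1) s' ^ 2) +
            (2 * (π t s a / μ t s a) *
              (π t s a / μ t s a * (r s a - b t s a) + bbar π b t s)) *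
              vf T p π r (t + 1) s' +
            (π t s a / μ t s a * (r s a - b t s a) + bbar π b t s) ^ 2) := by
        intro s' _
        congr 1
        have heq : (fun τ => (π t s a / μ t s a *
            (r s a + Gest π μ r b n (t + 1) s' τ - b t s a) + bbar π b t s) ^ 2) =
            (fun τ => (π t s a / μ t s a) ^ 2 * Gest π μ r b n (t + 1) s' τ ^ 2 +
              (2 * (π t s a / μ t s a) *
                (π t s a / μ t s a * (r s a - b t s a) + bbar π b t s)) *
                Gest π μ r b n (t + 1) s' τ +
              (π t s a / μ t s a * (r s a - b t s a) + bbar π b t s) ^ 2) := by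
          funext τ; ring
        rw [heq, Exp_quad p hp μ hμ, hEin s', hVin s']
      rw [Finset.sum_congr rfl hinner,
        sum_lin3 (p s a)
          (fun s' => VarG T p π μ r b (t + 1) s' + vf T p π r (t + 1) s' ^ 2)
          (fun s' => vf T p π r (t + 1) s') (hp s a).2]
      have hsplit : ∑ s', p s a s' *
          (VarG T p π μ r b (t + 1) s' + vf T p π r (t + 1) s' ^ 2) =
          (∑ s', p s a s' * VarG T p π μ r b (t + 1) s') +
          ∑ s', p s a s' * vf T p π r (t + 1) s' ^ 2 := by
        rw [← Finset.sum_add_distrib]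
        exact Finset.sum_congr rfl fun s' _ => mul_add _ _ _
      rw [hsplit, hq a, hnuf a]
      ring
    rw [Finset.sum_congr rfl key, Finset.sum_add_distrib, Finset.sum_add_distrib,
      ← Finset.mul_sum, ← Finset.mul_sum, (hμ t s).2,
      sum_mu_rho T p hp π hπ r b μ hΛ t s ht]
    ring

end DOpt
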